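/- Let d ≥ 1 and s, l ∈ ℝ. There exist a constant c > 0 and N₀ ∈ ℕ, depending only on d, s, l, such that for every integer N ≥ N₀ the following holds. Set Q := (−1/2, 1/2)^d, r := (log N)^{−2} and Σ := {0, Ne₁}. Then: (i) for every T with 0 < T ≤ c·N^{−2}, (∫_{ℝ^d} ⟨ξ⟩^{2l} |W(T,ξ)|² dξ)^{1/2} ≥ c · r² · T · N^{l−s+1}; and (ii) for every T with 0 < T ≤ c·N^{−1}, (∫_{ℝ^d} ⟨ξ⟩^{2l} |W(T,ξ)|² dξ)^{1/2} ≥ c · r² · T · N^{−2s}. -/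

import Mathlib

/-!
The η-integrand of the interaction (η₁, η₂) vanishes unless ξ ∈ η₁ - η₂ + (Q - Q). Hence for ξ in
a cube of side 1/4 just beyond N e₁ only the interaction (N e₁, 0) is seen, and for ξ in such a
cube just beyond 0 only (0, 0) and (N e₁, N e₁). On the support of these terms the phase
|ξ| - |η|² + |η - ξ|² = |ξ| + |ξ|² - 2⟨η, ξ⟩ is O(N²), resp. O(dN), so below the stated time
scales the time integral has real part at least T/2. There is then no cancellation: every surviving
term has nonnegative real part, and on a subcube where ⟨η⟩ and ⟨η - ξ⟩ are comparable to powers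
of N it is bounded below. Together with |ξ| ≳ N and ⟨ξ⟩ ≈ N, resp. |ξ| ≳ 1 and ⟨ξ⟩ ≈ 1, this bounds
Re W(T, ·) from below on a cube of fixed volume, which gives both estimates. The weighted L² norm is
not the junk value of a non-integrable Bochner integral because W(T, ·) is bounded with bounded
support.
-/

open MeasureTheory Set
open scoped Classical
noncomputable section

/-- The (Fourier-side) wave component of the second Picard iterate, up to a unimodular factor:
`W(T,ξ) = r²|Q|⁻¹|ξ| Σ_{η₁,η₂∈Σ} ∫_{η₁+Q} 1_{η₂+Q}(η−ξ) ⟨η⟩^{−s}⟨η−ξ⟩^{−s}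
  (∫₀ᵀ e^{iσ(|ξ|−|η|²+|η−ξ|²)} dσ) dη`. -/
def Wfun {d : ℕ} (s r : ℝ) (Q : Set (EuclideanSpace ℝ (Fin d)))
    (S : Finset (EuclideanSpace ℝ (Fin d))) (T : ℝ) (ξ : EuclideanSpace ℝ (Fin d)) : ℂ :=
  ((r ^ 2 * ((volume Q).toReal)⁻¹ * ‖ξ‖ : ℝ) : ℂ) *
    ∑ η₁ ∈ S, ∑ η₂ ∈ S,
      ∫ η in {ζ : EuclideanSpace ℝ (Fin d) | ζ - η₁ ∈ Q},
        Set.indicator {ζ : EuclideanSpace ℝ (Fin d) | ζ - η₂ ∈ Q} (fun _ => (1 : ℂ)) (η - ξ) *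
          (((1 + ‖η‖ ^ 2) ^ (-s / 2) * (1 + ‖η - ξ‖ ^ 2) ^ (-s / 2) : ℝ) : ℂ) *
          ∫ σ in (0 : ℝ)..T,
            Complex.exp (Complex.I * ((σ * (‖ξ‖ - ‖η‖ ^ 2 + ‖η - ξ‖ ^ 2) : ℝ) : ℂ))

local notation "𝔼" d:max => EuclideanSpace ℝ (Fin d)

lemma mul_rpow_le_rpow_of_le_mul {a y C : ℝ} (ha : 0 < a) (hC : 1 ≤ C) (h₁ : a ≤ C * y)
    (h₂ : y ≤ C * a) (t : ℝ) : C ^ (-|t|) * a ^ t ≤ y ^ t := by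
  have hC₀ : 0 < C := zero_lt_one.trans_le hC
  have hy : 0 < y := (mul_pos_iff_of_pos_left hC₀).mp (ha.trans_le h₁)
  rcases le_or_gt 0 t with ht | ht
  · rw [abs_of_nonneg ht, Real.rpow_neg hC₀.le, ← Real.inv_rpow hC₀.le,
      ← Real.mul_rpow (inv_nonneg.mpr hC₀.le) ha.le]
    exact Real.rpow_le_rpow (by positivity) ((inv_mul_le_iff₀ hC₀).mpr h₁) ht
  · rw [abs_of_neg ht, neg_neg, ← Real.mul_rpow hC₀.le ha.le]
    exact Real.rpow_le_rpow_of_nonpos hy h₂ ht.le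

section Bracket

variable {E : Type*} [SeminormedAddCommGroup E]

lemma one_add_norm_sq_rpow_le {x : E} {R : ℝ} (hx : ‖x‖ ≤ R) (t : ℝ) :
    (1 + ‖x‖ ^ 2) ^ t ≤ (1 + R ^ 2) ^ |t| := by
  have h₁ : 1 ≤ 1 + ‖x‖ ^ 2 := by nlinarith [norm_nonneg x]
  have h₂ : 1 + ‖x‖ ^ 2 ≤ 1 + R ^ 2 := by nlinarith [norm_nonneg x]
  rcases le_or_gt 0 t with ht | ht
  · rw [abs_of_nonneg ht]; exact Real.rpow_le_rpow (by positivity) h₂ ht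
  · calc (1 + ‖x‖ ^ 2) ^ t ≤ 1 := Real.rpow_le_one_of_one_le_of_nonpos h₁ ht.le
      _ ≤ (1 + R ^ 2) ^ |t| := Real.one_le_rpow (h₁.trans h₂) (abs_nonneg t)

lemma le_one_add_norm_sq_rpow {x : E} {R : ℝ} (hx : ‖x‖ ≤ R) (t : ℝ) :
    (1 + R ^ 2) ^ (-|t|) ≤ (1 + ‖x‖ ^ 2) ^ t := by
  simpa using mul_rpow_le_rpow_of_le_mul one_pos (a := 1) (y := 1 + ‖x‖ ^ 2)
    (by nlinarith [norm_nonneg x]) (by nlinarith [norm_nonneg x]) (by nlinarith [norm_nonneg x]) t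

lemma le_one_add_norm_sq_rpow_of_norm_sub_le {x v : E} (hv : 1 ≤ ‖v‖) (hx : ‖x - v‖ ≤ ‖v‖ / 2)
    (t : ℝ) : 4 ^ (-|t|) * (‖v‖ ^ 2) ^ t ≤ (1 + ‖x‖ ^ 2) ^ t := by
  have h₁ := norm_sub_norm_le v x
  have h₂ := norm_sub_norm_le x v
  rw [norm_sub_rev] at h₁
  exact mul_rpow_le_rpow_of_le_mul (by positivity) (by norm_num) (by nlinarith) (by nlinarith) t

end Bracket

lemma mul_measureReal_le_re_setIntegral {α : Type*} [MeasurableSpace α] {μ : Measure α}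
    {f : α → ℂ} {s t : Set α} {m : ℝ} (hs : MeasurableSet s) (ht : MeasurableSet t)
    (hts : t ⊆ s) (htμ : μ t ≠ ⊤) (hf : IntegrableOn f s μ) (hf₀ : ∀ x ∈ s, 0 ≤ (f x).re)
    (hm : ∀ x ∈ t, m ≤ (f x).re) :
    m * μ.real t ≤ (∫ x in s, f x ∂μ).re := by
  have hre : IntegrableOn (fun x => (f x).re) s μ := hf.re
  rw [← RCLike.re_to_complex, ← integral_re hf]
  calc m * μ.real t ≤ ∫ x in t, (f x).re ∂μ :=
        setIntegral_ge_of_const_le_real ht htμ hm (hre.mono_set hts)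
    _ ≤ ∫ x in s, (f x).re ∂μ :=
        setIntegral_mono_set hre ((ae_restrict_iff' hs).mpr (Filter.Eventually.of_forall hf₀))
          hts.eventuallyLE

lemma mul_sqrt_measureReal_le_sqrt_integral_sq {α : Type*} [MeasurableSpace α] {μ : Measure α}
    {g : α → ℝ} (hg : Integrable (fun x => g x ^ 2) μ) {A : Set α} (hA : MeasurableSet A)
    (hAμ : μ A ≠ ⊤) {P : ℝ} (hP : 0 ≤ P) (hPg : ∀ x ∈ A, P ≤ g x) :
    P * √(μ.real A) ≤ √(∫ x, g x ^ 2 ∂μ) := by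
  rw [← Real.sqrt_sq hP, ← Real.sqrt_mul (sq_nonneg P)]
  refine Real.sqrt_le_sqrt ?_
  calc P ^ 2 * μ.real A ≤ ∫ x in A, g x ^ 2 ∂μ := setIntegral_ge_of_const_le_real hA hAμ
        (fun x hx => pow_le_pow_left₀ hP (hPg x hx) 2) hg.integrableOn
    _ ≤ ∫ x, g x ^ 2 ∂μ := setIntegral_le_integral hg (Filter.Eventually.of_forall fun x => by
        positivity)

lemma sq_rpow_div_two {N : ℝ} (hN : 0 ≤ N) (t : ℝ) : (N ^ 2) ^ (t / 2) = N ^ t := by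
  rw [← Real.rpow_natCast, ← Real.rpow_mul hN]
  ring_nf

lemma mul_rpow_mul_le_of_le_mul_rpow_neg {K c N T k : ℝ} (hK : 0 ≤ K) (hN : 0 < N)
    (hT : T ≤ c * N ^ (-k)) : K * N ^ k * T ≤ K * c :=
  calc K * N ^ k * T ≤ K * N ^ k * (c * N ^ (-k)) := by gcongr
    _ = K * c := by rw [Real.rpow_neg hN.le]; field_simp

def oscIntegral (T φ : ℝ) : ℂ := ∫ σ in (0 : ℝ)..T, Complex.exp (Complex.I * ((σ * φ : ℝ) : ℂ))

lemma continuous_oscIntegral (T : ℝ) : Continuous (oscIntegral T) :=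
  intervalIntegral.continuous_parametric_intervalIntegral_of_continuous' (by fun_prop) 0 T

lemma norm_oscIntegral_le (T φ : ℝ) : ‖oscIntegral T φ‖ ≤ |T| := by
  have h := intervalIntegral.norm_integral_le_of_norm_le_const (a := 0) (b := T) (C := 1)
    (f := fun σ : ℝ => Complex.exp (Complex.I * ((σ * φ : ℝ) : ℂ)))
    fun σ _ => by rw [mul_comm, Complex.norm_exp_ofReal_mul_I]
  simpa [oscIntegral] using h

lemma re_oscIntegral (T φ : ℝ) :
    (oscIntegral T φ).re = ∫ σ in (0 : ℝ)..T, Real.cos (σ * φ) := by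
  have h := intervalIntegral.intervalIntegral_re (μ := volume) (a := 0) (b := T)
    (Continuous.intervalIntegrable
      (u := fun σ : ℝ => Complex.exp (((σ * φ : ℝ) : ℂ) * Complex.I)) (by fun_prop) _ _)
  simp_rw [RCLike.re_to_complex, Complex.exp_ofReal_mul_I_re] at h
  simp_rw [oscIntegral, mul_comm Complex.I]
  exact h.symm

lemma half_le_re_oscIntegral {T φ : ℝ} (hT : 0 < T) (hφ : |φ| * T ≤ 1) :
    T / 2 ≤ (oscIntegral T φ).re := by
  have hcos : ∀ σ ∈ Set.Icc 0 T, 1 / 2 ≤ Real.cos (σ * φ) := by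
    rintro σ ⟨hσ0, hσT⟩
    have h1 : |σ * φ| ≤ 1 := by
      rw [abs_mul, abs_of_nonneg hσ0]; nlinarith [abs_nonneg φ]
    have h2 : (σ * φ) ^ 2 ≤ 1 := by nlinarith [sq_abs (σ * φ), abs_nonneg (σ * φ)]
    nlinarith [Real.one_sub_sq_div_two_le_cos (x := σ * φ)]
  rw [re_oscIntegral]
  calc T / 2 = ∫ _ in (0 : ℝ)..T, (1 / 2 : ℝ) := by
        rw [intervalIntegral.integral_const, smul_eq_mul, sub_zero]; ring
    _ ≤ _ := intervalIntegral.integral_mono_on hT.le (by simp)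
      (Continuous.intervalIntegrable (by fun_prop) _ _) hcos

def phase {d : ℕ} (ξ η : 𝔼 d) : ℝ := ‖ξ‖ - ‖η‖ ^ 2 + ‖η - ξ‖ ^ 2

lemma abs_phase_le {d : ℕ} (ξ η : 𝔼 d) : |phase ξ η| ≤ ‖ξ‖ * (1 + ‖ξ‖ + 2 * ‖η‖) := by
  have h := abs_le.mp (abs_real_inner_le_norm η ξ)
  rw [phase, norm_sub_sq_real, abs_le]
  constructor <;> nlinarith [norm_nonneg ξ]

lemma abs_phase_mul_le_one {d : ℕ} {ξ η : 𝔼 d} {a b T : ℝ} (hξ : ‖ξ‖ ≤ a) (hη : ‖η‖ ≤ b)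
    (hT : 0 ≤ T) (h : a * (1 + a + 2 * b) * T ≤ 1) : |phase ξ η| * T ≤ 1 :=
  calc |phase ξ η| * T ≤ ‖ξ‖ * (1 + ‖ξ‖ + 2 * ‖η‖) * T := by gcongr; exact abs_phase_le ξ η
    _ ≤ a * (1 + a + 2 * b) * T := by gcongr; exact (norm_nonneg ξ).trans hξ
    _ ≤ 1 := h

lemma volume_setOf_sub_mem {d : ℕ} (Q : Set (𝔼 d)) (a : 𝔼 d) :
    volume {ζ : 𝔼 d | ζ - a ∈ Q} = volume Q := by
  have h := measure_preimage_add_right volume (-a) Q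
  simp only [Set.preimage, ← sub_eq_add_neg] at h
  exact h

section WaveTerm

variable {d : ℕ} (s T : ℝ) (Q : Set (𝔼 d))

def waveIntegrand (η₂ ξ η : 𝔼 d) : ℂ :=
  Set.indicator {ζ : 𝔼 d | ζ - η₂ ∈ Q} (fun _ => (1 : ℂ)) (η - ξ) *
    (((1 + ‖η‖ ^ 2) ^ (-s / 2) * (1 + ‖η - ξ‖ ^ 2) ^ (-s / 2) : ℝ) : ℂ) * oscIntegral T (phase ξ η)

def waveTerm (η₁ η₂ ξ : 𝔼 d) : ℂ := ∫ η in {ζ : 𝔼 d | ζ - η₁ ∈ Q}, waveIntegrand s T Q η₂ ξ η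

lemma Wfun_eq_sum_waveTerm (r : ℝ) (S : Finset (𝔼 d)) (ξ : 𝔼 d) :
    Wfun s r Q S T ξ = ((r ^ 2 * ((volume Q).toReal)⁻¹ * ‖ξ‖ : ℝ) : ℂ) *
      ∑ η₁ ∈ S, ∑ η₂ ∈ S, waveTerm s T Q η₁ η₂ ξ := rfl

variable {s T Q}

lemma waveIntegrand_eq_indicator (η₂ ξ η : 𝔼 d) :
    waveIntegrand s T Q η₂ ξ η = Set.indicator {η | η - ξ - η₂ ∈ Q}
      (fun η => (((1 + ‖η‖ ^ 2) ^ (-s / 2) * (1 + ‖η - ξ‖ ^ 2) ^ (-s / 2) : ℝ) : ℂ) *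
        oscIntegral T (phase ξ η)) η := by
  by_cases h : η - ξ - η₂ ∈ Q <;> simp [waveIntegrand, Set.indicator, h]

lemma waveIntegrand_of_notMem {η₂ ξ η : 𝔼 d} (h : η - ξ - η₂ ∉ Q) :
    waveIntegrand s T Q η₂ ξ η = 0 := by
  simp [waveIntegrand, h]

lemma re_waveIntegrand_of_mem {η₂ ξ η : 𝔼 d} (h : η - ξ - η₂ ∈ Q) :
    (waveIntegrand s T Q η₂ ξ η).re =
      (1 + ‖η‖ ^ 2) ^ (-s / 2) * (1 + ‖η - ξ‖ ^ 2) ^ (-s / 2) * (oscIntegral T (phase ξ η)).re := by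
  simp [waveIntegrand, h]

lemma norm_waveIntegrand_of_mem {η₂ ξ η : 𝔼 d} (h : η - ξ - η₂ ∈ Q) :
    ‖waveIntegrand s T Q η₂ ξ η‖ ≤
      (1 + ‖η‖ ^ 2) ^ (-s / 2) * (1 + ‖η - ξ‖ ^ 2) ^ (-s / 2) * |T| := by
  rw [waveIntegrand_eq_indicator, Set.indicator_of_mem (show η ∈ {η | η - ξ - η₂ ∈ Q} from h),
    norm_mul, Complex.norm_real, Real.norm_of_nonneg (by positivity)]
  gcongr
  exact norm_oscIntegral_le T _

lemma stronglyMeasurable_waveIntegrand (hQ : MeasurableSet Q) (η₂ : 𝔼 d) :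
    StronglyMeasurable fun p : 𝔼 d × 𝔼 d => waveIntegrand s T Q η₂ p.1 p.2 := by
  have hcont : Continuous fun p : 𝔼 d × 𝔼 d =>
      (((1 + ‖p.2‖ ^ 2) ^ (-s / 2) * (1 + ‖p.2 - p.1‖ ^ 2) ^ (-s / 2) : ℝ) : ℂ) *
        oscIntegral T (phase p.1 p.2) := by
    refine Continuous.mul (Complex.continuous_ofReal.comp (Continuous.mul ?_ ?_))
      ((continuous_oscIntegral T).comp (by unfold phase; fun_prop))
    all_goals exact Continuous.rpow_const (by fun_prop) fun _ => Or.inl (by positivity)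
  simp_rw [waveIntegrand_eq_indicator]
  exact hcont.stronglyMeasurable.indicator
    (hQ.preimage ((measurable_snd.sub measurable_fst).sub_const η₂))

lemma exists_norm_waveIntegrand_le (hQ : Bornology.IsBounded Q) (η₁ η₂ : 𝔼 d) :
    ∃ C, ∀ ξ η, η - η₁ ∈ Q → ‖waveIntegrand s T Q η₂ ξ η‖ ≤ C := by
  obtain ⟨ρ, hρ⟩ := isBounded_iff_forall_norm_le.mp hQ
  refine ⟨(1 + (‖η₁‖ + ρ) ^ 2) ^ |-s / 2| * (1 + (‖η₂‖ + ρ) ^ 2) ^ |-s / 2| * |T|,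
    fun ξ η hη => ?_⟩
  by_cases hξη : η - ξ - η₂ ∈ Q
  · refine (norm_waveIntegrand_of_mem hξη).trans ?_
    have h₁ : ‖η‖ ≤ ‖η₁‖ + ρ := by
      simpa using (norm_add_le η₁ (η - η₁)).trans (add_le_add_right (hρ _ hη) _)
    have h₂ : ‖η - ξ‖ ≤ ‖η₂‖ + ρ := by
      simpa using (norm_add_le η₂ (η - ξ - η₂)).trans (add_le_add_right (hρ _ hξη) _)
    gcongr
    · exact one_add_norm_sq_rpow_le h₁ _
    · exact one_add_norm_sq_rpow_le h₂ _
  · rw [waveIntegrand_of_notMem hξη, norm_zero]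
    positivity

lemma integrableOn_waveIntegrand (hQ : MeasurableSet Q) (hQb : Bornology.IsBounded Q)
    (η₁ η₂ ξ : 𝔼 d) :
    IntegrableOn (waveIntegrand s T Q η₂ ξ) {ζ | ζ - η₁ ∈ Q} := by
  obtain ⟨C, hC⟩ := exists_norm_waveIntegrand_le (s := s) (T := T) hQb η₁ η₂
  refine Measure.integrableOn_of_bounded (M := C)
    (by rw [volume_setOf_sub_mem]; exact hQb.measure_lt_top.ne)
    ((stronglyMeasurable_waveIntegrand hQ η₂).comp_measurable
      (measurable_const.prodMk measurable_id)).aestronglyMeasurable ?_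
  exact (ae_restrict_iff' (hQ.preimage (measurable_id.sub_const η₁))).mpr
    (Filter.Eventually.of_forall fun η hη => hC ξ η hη)

lemma exists_norm_waveTerm_le (hQb : Bornology.IsBounded Q) (η₁ η₂ : 𝔼 d) :
    ∃ C, ∀ ξ, ‖waveTerm s T Q η₁ η₂ ξ‖ ≤ C := by
  obtain ⟨C, hC⟩ := exists_norm_waveIntegrand_le (s := s) (T := T) hQb η₁ η₂
  refine ⟨C * volume.real Q, fun ξ => ?_⟩
  have h := norm_setIntegral_le_of_norm_le_const (μ := volume) (s := {ζ | ζ - η₁ ∈ Q})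
    (by rw [volume_setOf_sub_mem]; exact hQb.measure_lt_top) fun η hη => hC ξ η hη
  rwa [measureReal_def, volume_setOf_sub_mem, ← measureReal_def] at h

lemma aestronglyMeasurable_waveTerm (hQ : MeasurableSet Q) (η₁ η₂ : 𝔼 d) :
    AEStronglyMeasurable (waveTerm s T Q η₁ η₂) :=
  ((stronglyMeasurable_waveIntegrand hQ η₂).integral_prod_right'
    (ν := volume.restrict {ζ | ζ - η₁ ∈ Q})).aestronglyMeasurable

lemma waveTerm_eq_zero {η₁ η₂ ξ : 𝔼 d} (h : ∀ η, η - η₁ ∈ Q → η - ξ - η₂ ∉ Q) :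
    waveTerm s T Q η₁ η₂ ξ = 0 := by
  exact setIntegral_eq_zero_of_forall_eq_zero fun η hη => waveIntegrand_of_notMem (h η hη)

lemma le_re_waveTerm (hQ : MeasurableSet Q) (hQb : Bornology.IsBounded Q) (hT : 0 < T)
    {η₁ η₂ ξ : 𝔼 d} (hphase : ∀ η, η - η₁ ∈ Q → η - ξ - η₂ ∈ Q → |phase ξ η| * T ≤ 1)
    {B : Set (𝔼 d)} (hB : MeasurableSet B) (hBQ : ∀ η ∈ B, η - η₁ ∈ Q ∧ η - ξ - η₂ ∈ Q)
    {m : ℝ} (hm : ∀ η ∈ B, m ≤ (1 + ‖η‖ ^ 2) ^ (-s / 2) * (1 + ‖η - ξ‖ ^ 2) ^ (-s / 2)) :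
    m * (T / 2) * volume.real B ≤ (waveTerm s T Q η₁ η₂ ξ).re := by
  have hre : ∀ η, η - η₁ ∈ Q → η - ξ - η₂ ∈ Q →
      (1 + ‖η‖ ^ 2) ^ (-s / 2) * (1 + ‖η - ξ‖ ^ 2) ^ (-s / 2) * (T / 2) ≤
        (waveIntegrand s T Q η₂ ξ η).re := fun η hη hξη => by
    rw [re_waveIntegrand_of_mem hξη]
    gcongr
    exact half_le_re_oscIntegral hT (hphase η hη hξη)
  refine mul_measureReal_le_re_setIntegral (hQ.preimage (measurable_id.sub_const η₁)) hB
    (fun η hη => (hBQ η hη).1) ?_ (integrableOn_waveIntegrand hQ hQb η₁ η₂ ξ) (fun η hη => ?_)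
    (fun η hη => ?_)
  · refine ne_top_of_le_ne_top (b := volume {ζ : 𝔼 d | ζ - η₁ ∈ Q}) ?_
      (measure_mono fun η hη => (hBQ η hη).1)
    rw [volume_setOf_sub_mem]; exact hQb.measure_lt_top.ne
  · by_cases hξη : η - ξ - η₂ ∈ Q
    · exact le_trans (by positivity) (hre η hη hξη)
    · rw [waveIntegrand_of_notMem hξη, Complex.zero_re]
  · exact (mul_le_mul_of_nonneg_right (hm η hη) (by positivity)).trans
      (hre η (hBQ η hη).1 (hBQ η hη).2)

lemma waveTerm_eq_zero_of_norm_lt {ρ : ℝ} (hρ : ∀ x ∈ Q, ‖x‖ ≤ ρ) {η₁ η₂ ξ : 𝔼 d}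
    (hξ : 2 * ρ + ‖η₁‖ + ‖η₂‖ < ‖ξ‖) : waveTerm s T Q η₁ η₂ ξ = 0 := by
  refine waveTerm_eq_zero fun η hη hξη => hξ.not_ge ?_
  have h := norm_sub_le (η - η₁ + η₁ - η₂) (η - ξ - η₂)
  have h' := norm_add_le (η - η₁) η₁
  have h'' := norm_sub_le (η - η₁ + η₁) η₂
  simp only [sub_add_cancel, sub_sub_sub_cancel_right, sub_sub_cancel] at h h' h''
  linarith [hρ _ hη, hρ _ hξη]

lemma aestronglyMeasurable_Wfun (hQ : MeasurableSet Q) (r : ℝ) (S : Finset (𝔼 d)) :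
    AEStronglyMeasurable (Wfun s r Q S T) := by
  rw [show Wfun s r Q S T = _ from funext (Wfun_eq_sum_waveTerm s T Q r S)]
  exact (Complex.continuous_ofReal.comp (by fun_prop)).aestronglyMeasurable.mul
    (Finset.aestronglyMeasurable_fun_sum _ fun η₁ _ =>
      Finset.aestronglyMeasurable_fun_sum _ fun η₂ _ => aestronglyMeasurable_waveTerm hQ η₁ η₂)

theorem integrable_weighted_norm_Wfun_sq (hQ : MeasurableSet Q) (hQb : Bornology.IsBounded Q)
    (r : ℝ) (S : Finset (𝔼 d)) (l : ℝ) :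
    Integrable fun ξ => (1 + ‖ξ‖ ^ 2) ^ l * ‖Wfun s r Q S T ξ‖ ^ 2 := by
  obtain ⟨ρ, hρ⟩ := isBounded_iff_forall_norm_le.mp hQb
  choose C hC using fun η₁ η₂ => exists_norm_waveTerm_le (s := s) (T := T) hQb η₁ η₂
  set R := 2 * ρ + 2 * ∑ η ∈ S, ‖η‖
  have hzero : ∀ ξ, R < ‖ξ‖ → Wfun s r Q S T ξ = 0 := fun ξ hξ => by
    rw [Wfun_eq_sum_waveTerm]
    refine mul_eq_zero_of_right _ (Finset.sum_eq_zero fun η₁ h₁ => Finset.sum_eq_zero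
      fun η₂ h₂ => waveTerm_eq_zero_of_norm_lt hρ (lt_of_le_of_lt ?_ hξ))
    have := Finset.single_le_sum (fun η _ => norm_nonneg η) h₁
    have := Finset.single_le_sum (fun η _ => norm_nonneg η) h₂
    linarith
  set K := |r ^ 2 * ((volume Q).toReal)⁻¹| * R * ∑ η₁ ∈ S, ∑ η₂ ∈ S, C η₁ η₂
  have hbound : ∀ ξ, ‖ξ‖ ≤ R → ‖Wfun s r Q S T ξ‖ ≤ K := fun ξ hξ => by
    rw [Wfun_eq_sum_waveTerm, norm_mul, Complex.norm_real, Real.norm_eq_abs, abs_mul,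
      abs_norm]
    refine mul_le_mul (by gcongr) ((norm_sum_le _ _).trans (Finset.sum_le_sum fun η₁ _ =>
      (norm_sum_le _ _).trans (Finset.sum_le_sum fun η₂ _ => hC η₁ η₂ ξ)))
      (norm_nonneg _) (mul_nonneg (abs_nonneg _) ((norm_nonneg ξ).trans hξ))
  have hsupp : Function.support (fun ξ => (1 + ‖ξ‖ ^ 2) ^ l * ‖Wfun s r Q S T ξ‖ ^ 2) ⊆
      Metric.closedBall 0 R := fun ξ hξ => by
    by_contra h
    rw [Metric.mem_closedBall, dist_zero_right, not_le] at h
    simp [hzero ξ h] at hξ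
  refine (integrableOn_iff_integrable_of_support_subset hsupp).mp
    (Measure.integrableOn_of_bounded (M := (1 + R ^ 2) ^ |l| * K ^ 2)
      measure_closedBall_lt_top.ne ?_ ?_)
  · have hW := aestronglyMeasurable_Wfun (s := s) (T := T) hQ r S
    exact (Continuous.rpow_const (by fun_prop) fun _ => Or.inl (by positivity)
      ).aestronglyMeasurable.mul (hW.norm.pow 2)
  · refine (ae_restrict_iff' measurableSet_closedBall).mpr (Filter.Eventually.of_forall
      fun ξ hξ => ?_)
    rw [Metric.mem_closedBall, dist_zero_right] at hξ
    rw [Real.norm_of_nonneg (by positivity)]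
    gcongr
    · exact one_add_norm_sq_rpow_le hξ l
    · exact hbound ξ hξ

lemma mul_sqrt_measureReal_le_weighted_norm_Wfun {r l P : ℝ} {A : Set (𝔼 d)}
    {S : Finset (𝔼 d)} (hQ : MeasurableSet Q) (hQb : Bornology.IsBounded Q)
    (hA : MeasurableSet A) (hAvol : volume A ≠ ⊤) (hP : 0 ≤ P)
    (hPA : ∀ ξ ∈ A, P ≤ (1 + ‖ξ‖ ^ 2) ^ (l / 2) * (Wfun s r Q S T ξ).re) :
    P * √(volume.real A) ≤ (∫ ξ, (1 + ‖ξ‖ ^ 2) ^ l * ‖Wfun s r Q S T ξ‖ ^ 2) ^ (1 / 2 : ℝ) := by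
  have hsq : ∀ ξ : 𝔼 d, (1 + ‖ξ‖ ^ 2) ^ l * ‖Wfun s r Q S T ξ‖ ^ 2 =
      ((1 + ‖ξ‖ ^ 2) ^ (l / 2) * ‖Wfun s r Q S T ξ‖) ^ 2 := fun ξ => by
    rw [mul_pow, ← Real.rpow_natCast ((1 + ‖ξ‖ ^ 2) ^ (l / 2)), ← Real.rpow_mul (by positivity)]
    norm_num
  simp_rw [hsq, ← Real.sqrt_eq_rpow]
  refine mul_sqrt_measureReal_le_sqrt_integral_sq ?_ hA hAvol hP fun ξ hξ =>
    (hPA ξ hξ).trans (by gcongr; exact Complex.re_le_norm _)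
  simpa only [← hsq] using integrable_weighted_norm_Wfun_sq hQ hQb r S l

end WaveTerm

def cube (d : ℕ) : Set (𝔼 d) := {ξ | ∀ i, |ξ i| < 1 / 2}

section Cube

variable {d : ℕ}

def box (a : 𝔼 d) (p q : ℝ) : Set (𝔼 d) := {ξ | ∀ i, ξ i - a i ∈ Ioo p q}

lemma measurableSet_box (a : 𝔼 d) (p q : ℝ) : MeasurableSet (box a p q) := by
  simp only [box, Set.ofPred_forall]
  exact MeasurableSet.iInter fun i => measurableSet_Ioo.preimage (by fun_prop)

lemma volume_box (a : 𝔼 d) (p q : ℝ) : volume (box a p q) = ENNReal.ofReal (q - p) ^ d := by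
  have h : box a p q = (MeasurableEquiv.toLp 2 (Fin d → ℝ)).symm ⁻¹'
      Set.univ.pi fun i => Ioo (a i + p) (a i + q) := by
    ext ξ
    simp only [box, mem_ofPred_eq, mem_preimage, Set.mem_univ_pi, mem_Ioo,
      MeasurableEquiv.coe_toLp_symm]
    refine forall_congr' fun i => ?_
    constructor <;> rintro ⟨h₁, h₂⟩ <;> constructor <;> linarith
  rw [h, (EuclideanSpace.volume_preserving_symm_measurableEquiv_toLp (Fin d)).measure_preimage
    (MeasurableSet.univ_pi fun _ => measurableSet_Ioo).nullMeasurableSet, volume_pi_pi]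
  simp [Real.volume_Ioo]

lemma volume_real_box (a : 𝔼 d) {p q : ℝ} (hpq : p ≤ q) :
    volume.real (box a p q) = (q - p) ^ d := by
  rw [measureReal_def, volume_box, ENNReal.toReal_pow, ENNReal.toReal_ofReal (sub_nonneg.mpr hpq)]

lemma cube_eq_box : cube d = box 0 (-(1 / 2)) (1 / 2) := by
  ext ξ
  simp [cube, box, abs_lt]

lemma measurableSet_cube : MeasurableSet (cube d) :=
  cube_eq_box (d := d) ▸ measurableSet_box _ _ _

lemma volume_cube : volume (cube d) = 1 := by
  rw [cube_eq_box, volume_box]; norm_num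

lemma norm_le_of_mem_cube {x : 𝔼 d} (hx : x ∈ cube d) : ‖x‖ ≤ d / 2 := by
  have hsq : ‖x‖ ^ 2 ≤ (d / 2) ^ 2 := by
    have hd : (d : ℝ) ≤ d ^ 2 := by exact_mod_cast Nat.le_self_pow two_ne_zero d
    calc ‖x‖ ^ 2 = ∑ i, x i ^ 2 := EuclideanSpace.real_norm_sq_eq x
      _ ≤ ∑ _i : Fin d, (1 / 2 : ℝ) ^ 2 := Finset.sum_le_sum fun i _ => by
          rw [← sq_abs]; exact pow_le_pow_left₀ (abs_nonneg _) (hx i).le 2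
      _ ≤ (d / 2) ^ 2 := by
          rw [Finset.sum_const, Finset.card_univ, Fintype.card_fin, nsmul_eq_mul]; nlinarith
  exact le_of_sq_le_sq (by linarith) (by positivity)

lemma isBounded_cube : Bornology.IsBounded (cube d) :=
  isBounded_iff_forall_norm_le.mpr ⟨d / 2, fun _ => norm_le_of_mem_cube⟩

lemma sub_mem_cube_of_mem_box {x a : 𝔼 d} {p q : ℝ} (hx : x ∈ box a p q)
    (hp : -(1 / 2) ≤ p) (hq : q ≤ 1 / 2) : x - a ∈ cube d := fun i => by
  have := hx i
  simp only [mem_Ioo] at this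
  rw [PiLp.sub_apply, abs_lt]
  constructor <;> linarith

lemma sub_sub_mem_cube {η ξ a b : 𝔼 d} (hη : η ∈ box a 0 (1 / 4))
    (hξ : ξ ∈ box b (1 / 4) (1 / 2)) : η - ξ - (a - b) ∈ cube d := fun i => by
  have h₁ := hη i
  have h₂ := hξ i
  simp only [mem_Ioo] at h₁ h₂
  simp only [PiLp.sub_apply, abs_lt]
  constructor <;> linarith

lemma waveTerm_cube_eq_zero {s T : ℝ} {η₁ η₂ ξ : 𝔼 d} (i : Fin d)
    (h : 1 ≤ |ξ i - (η₁ i - η₂ i)|) : waveTerm s T (cube d) η₁ η₂ ξ = 0 := by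
  refine waveTerm_eq_zero fun η hη hξη => h.not_gt ?_
  have h₁ := abs_lt.mp (hη i)
  have h₂ := abs_lt.mp (hξη i)
  simp only [PiLp.sub_apply] at h₁ h₂
  rw [abs_lt]
  constructor <;> linarith

lemma re_Wfun_cube_pair (s r T : ℝ) {v : 𝔼 d} (hv : v ≠ 0) (ξ : 𝔼 d) :
    (Wfun s r (cube d) {0, v} T ξ).re = r ^ 2 * ‖ξ‖ *
      ((waveTerm s T (cube d) 0 0 ξ).re + (waveTerm s T (cube d) 0 v ξ).re +
        ((waveTerm s T (cube d) v 0 ξ).re + (waveTerm s T (cube d) v v ξ).re)) := by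
  rw [Wfun_eq_sum_waveTerm, Finset.sum_pair hv.symm, Finset.sum_pair hv.symm,
    Finset.sum_pair hv.symm, volume_cube, Complex.re_ofReal_mul]
  simp

lemma sqrt_measureReal_box_quarter (a : 𝔼 d) :
    √(volume.real (box a (1 / 4) (1 / 2))) = (1 / 2) ^ d := by
  rw [volume_real_box a (by norm_num), show (1 / 2 - 1 / 4 : ℝ) ^ d = ((1 / 2) ^ d) ^ 2 by
    rw [← pow_mul, mul_comm, pow_mul]; norm_num, Real.sqrt_sq (by positivity)]

end Cube

section PairOfCubes

variable {d : ℕ} {s r T N : ℝ} {i₀ : Fin d} {v : 𝔼 d}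

lemma abs_apply_le_norm (x : 𝔼 d) (i : Fin d) : |x i| ≤ ‖x‖ := by
  simpa using PiLp.norm_apply_le x i

lemma norm_le_of_sub_mem_cube {η a : 𝔼 d} (h : η - a ∈ cube d) : ‖η‖ ≤ ‖a‖ + d / 2 := by
  simpa using (norm_add_le a (η - a)).trans (add_le_add_right (norm_le_of_mem_cube h) _)

lemma le_one_add_norm_sq_rpow_of_sub_mem_cube (hvN : ‖v‖ = N) (hN₂ : 2 ≤ N) (hNd : (d : ℝ) ≤ N)
    {x : 𝔼 d} (hx : x - v ∈ cube d) (t : ℝ) : 4 ^ (-|t|) * (N ^ 2) ^ t ≤ (1 + ‖x‖ ^ 2) ^ t := by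
  have := norm_le_of_mem_cube hx
  rw [← hvN]
  exact le_one_add_norm_sq_rpow_of_norm_sub_le (by linarith) (by linarith) t

lemma le_re_Wfun_of_mem_box_high (hv₀ : v i₀ = N) (hvN : ‖v‖ = N) (hN₂ : 2 ≤ N)
    (hNd : (d : ℝ) ≤ N) (hT : 0 < T) (hTN : 8 * N ^ 2 * T ≤ 1) {ξ : 𝔼 d}
    (hξ : ξ ∈ box v (1 / 4) (1 / 2)) :
    r ^ 2 * N * (4 ^ (-|-s / 2|) * (N ^ 2) ^ (-s / 2) * (1 + (d / 2) ^ 2) ^ (-|-s / 2|) *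
      (T / 2) * (1 / 4) ^ d) ≤ (Wfun s r (cube d) {0, v} T ξ).re := by
  have hv : v ≠ 0 := norm_ne_zero_iff.mp (by rw [hvN]; linarith)
  obtain ⟨hξ₁, hξ₂⟩ := hξ i₀
  rw [hv₀] at hξ₁ hξ₂
  have hξN : ‖ξ‖ ≤ N + d / 2 :=
    hvN ▸ norm_le_of_sub_mem_cube (sub_mem_cube_of_mem_box hξ (by norm_num) le_rfl)
  have h₀₀ : waveTerm s T (cube d) 0 0 ξ = 0 := waveTerm_cube_eq_zero i₀
    (le_abs.mpr (Or.inl (by simp only [PiLp.zero_apply, sub_self, sub_zero]; linarith)))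
  have h₀ᵥ : waveTerm s T (cube d) 0 v ξ = 0 := waveTerm_cube_eq_zero i₀
    (le_abs.mpr (Or.inl (by simp only [PiLp.zero_apply, hv₀, zero_sub, sub_neg_eq_add]; linarith)))
  have hᵥᵥ : waveTerm s T (cube d) v v ξ = 0 := waveTerm_cube_eq_zero i₀
    (le_abs.mpr (Or.inl (by simp only [sub_self, sub_zero]; linarith)))
  have hᵥ₀ := le_re_waveTerm (s := s) measurableSet_cube isBounded_cube hT
    (η₁ := v) (η₂ := 0) (ξ := ξ) (B := box v 0 (1 / 4))
    (m := 4 ^ (-|-s / 2|) * (N ^ 2) ^ (-s / 2) * (1 + (d / 2) ^ 2) ^ (-|-s / 2|))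
    (fun η hη _ => abs_phase_mul_le_one (a := 3 / 2 * N) (b := 3 / 2 * N) (by linarith)
      (by linarith [hvN ▸ norm_le_of_sub_mem_cube hη]) hT.le (by nlinarith))
    (measurableSet_box _ _ _)
    (fun η hη => ⟨sub_mem_cube_of_mem_box hη (by norm_num) (by norm_num),
      by simpa using sub_sub_mem_cube hη hξ⟩)
    (fun η hη => by
      gcongr
      · exact le_one_add_norm_sq_rpow_of_sub_mem_cube hvN hN₂ hNd
          (sub_mem_cube_of_mem_box hη (by norm_num) (by norm_num)) _
      · exact le_one_add_norm_sq_rpow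
          (norm_le_of_mem_cube (by simpa using sub_sub_mem_cube hη hξ)) _)
  rw [volume_real_box _ (by norm_num), sub_zero] at hᵥ₀
  have hNξ : N ≤ ‖ξ‖ := by linarith [le_abs_self (ξ i₀), abs_apply_le_norm ξ i₀]
  rw [re_Wfun_cube_pair s r T hv ξ, h₀₀, h₀ᵥ, hᵥᵥ]
  simp only [Complex.zero_re, add_zero, zero_add]
  exact mul_le_mul (mul_le_mul_of_nonneg_left hNξ (sq_nonneg r)) hᵥ₀ (by positivity)
    (by positivity)

lemma le_re_Wfun_of_mem_box_low (hv₀ : v i₀ = N) (hvN : ‖v‖ = N) (hN₂ : 2 ≤ N)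
    (hNd : (d : ℝ) ≤ N) (hT : 0 < T) (hTN : 2 * d * N * T ≤ 1) {ξ : 𝔼 d}
    (hξ : ξ ∈ box 0 (1 / 4) (1 / 2)) :
    r ^ 2 * (1 / 4) * ((4 ^ (-|-s / 2|) * (N ^ 2) ^ (-s / 2)) ^ 2 * (T / 2) * (1 / 4) ^ d) ≤
      (Wfun s r (cube d) {0, v} T ξ).re := by
  have hv : v ≠ 0 := norm_ne_zero_iff.mp (by rw [hvN]; linarith)
  obtain ⟨hξ₁, hξ₂⟩ := hξ i₀
  rw [PiLp.zero_apply, sub_zero] at hξ₁ hξ₂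
  have hξN : ‖ξ‖ ≤ d / 2 := by
    simpa using norm_le_of_mem_cube (sub_mem_cube_of_mem_box hξ (by norm_num) le_rfl)
  have h₀ᵥ : waveTerm s T (cube d) 0 v ξ = 0 := waveTerm_cube_eq_zero i₀
    (le_abs.mpr (Or.inl (by simp only [PiLp.zero_apply, hv₀, zero_sub, sub_neg_eq_add]; linarith)))
  have hᵥ₀ : waveTerm s T (cube d) v 0 ξ = 0 := waveTerm_cube_eq_zero i₀
    (le_abs.mpr (Or.inr (by simp only [PiLp.zero_apply, hv₀, sub_zero]; linarith)))
  have hphase : ∀ η₁ : 𝔼 d, ‖η₁‖ ≤ N → ∀ η, η - η₁ ∈ cube d → |phase ξ η| * T ≤ 1 :=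
    fun η₁ hη₁ η hη => abs_phase_mul_le_one (a := d / 2) (b := 3 / 2 * N) hξN
      (by linarith [norm_le_of_sub_mem_cube hη]) hT.le (by nlinarith)
  have h₀₀ := le_re_waveTerm (s := s) measurableSet_cube isBounded_cube hT
    (η₁ := 0) (η₂ := 0) (ξ := ξ) (B := ∅) (m := 0)
    (fun η hη _ => hphase 0 (by rw [norm_zero]; linarith) η hη) MeasurableSet.empty
    (by simp) (by simp)
  have hᵥᵥ := le_re_waveTerm (s := s) measurableSet_cube isBounded_cube hT
    (η₁ := v) (η₂ := v) (ξ := ξ) (B := box v 0 (1 / 4))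
    (m := (4 ^ (-|-s / 2|) * (N ^ 2) ^ (-s / 2)) ^ 2)
    (fun η hη _ => hphase v hvN.le η hη) (measurableSet_box _ _ _)
    (fun η hη => ⟨sub_mem_cube_of_mem_box hη (by norm_num) (by norm_num),
      by simpa using sub_sub_mem_cube hη hξ⟩)
    (fun η hη => by
      rw [sq]
      gcongr
      · exact le_one_add_norm_sq_rpow_of_sub_mem_cube hvN hN₂ hNd
          (sub_mem_cube_of_mem_box hη (by norm_num) (by norm_num)) _
      · exact le_one_add_norm_sq_rpow_of_sub_mem_cube hvN hN₂ hNd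
          (by simpa using sub_sub_mem_cube hη hξ) _)
  rw [volume_real_box _ (by norm_num), sub_zero] at hᵥᵥ
  rw [zero_mul, zero_mul] at h₀₀
  have hξ₀ : 1 / 4 ≤ ‖ξ‖ := by linarith [le_abs_self (ξ i₀), abs_apply_le_norm ξ i₀]
  rw [re_Wfun_cube_pair s r T hv ξ, h₀ᵥ, hᵥ₀]
  simp only [Complex.zero_re, add_zero, zero_add]
  exact mul_le_mul (mul_le_mul_of_nonneg_left hξ₀ (sq_nonneg r)) (by linarith) (by positivity)
    (by positivity)

end PairOfCubes

theorem exists_weighted_norm_Wfun_ge_high (d : ℕ) (s l : ℝ) : ∃ c > 0,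
    ∀ {N T : ℝ} {i₀ : Fin d} {v : 𝔼 d}, v i₀ = N → ‖v‖ = N → 2 ≤ N → (d : ℝ) ≤ N → 0 < T →
      8 * N ^ 2 * T ≤ 1 → ∀ r : ℝ, c * r ^ 2 * T * N ^ (l - s + 1) ≤
        (∫ ξ, (1 + ‖ξ‖ ^ 2) ^ l * ‖Wfun s r (cube d) {0, v} T ξ‖ ^ 2) ^ (1 / 2 : ℝ) := by
  refine ⟨4 ^ (-|l / 2|) * (4 ^ (-|-s / 2|) * (1 + (d / 2) ^ 2) ^ (-|-s / 2|) *
    (1 / 2) * (1 / 4) ^ d) * (1 / 2) ^ d, by positivity,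
    fun {N T i₀ v} hv₀ hvN hN₂ hNd hT hTN r => ?_⟩
  have key := mul_sqrt_measureReal_le_weighted_norm_Wfun measurableSet_cube isBounded_cube
    (measurableSet_box v (1 / 4) (1 / 2)) (by rw [volume_box]; simp)
    (P := 4 ^ (-|l / 2|) * (N ^ 2) ^ (l / 2) * (r ^ 2 * N * (4 ^ (-|-s / 2|) * (N ^ 2) ^ (-s / 2) *
      (1 + (d / 2) ^ 2) ^ (-|-s / 2|) * (T / 2) * (1 / 4) ^ d))) (by positivity)
    fun ξ hξ => by
      gcongr
      · exact le_one_add_norm_sq_rpow_of_sub_mem_cube hvN hN₂ hNd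
          (sub_mem_cube_of_mem_box hξ (by norm_num) le_rfl) (l / 2)
      · exact le_re_Wfun_of_mem_box_high hv₀ hvN hN₂ hNd hT hTN hξ
  refine le_of_eq_of_le ?_ key
  have hN₀ : 0 ≤ N := by linarith
  rw [sqrt_measureReal_box_quarter, sq_rpow_div_two hN₀, sq_rpow_div_two hN₀, Real.rpow_neg hN₀,
    Real.rpow_add (by linarith), Real.rpow_sub (by linarith), Real.rpow_one]
  ring

theorem exists_weighted_norm_Wfun_ge_low (d : ℕ) (s l : ℝ) : ∃ c > 0,
    ∀ {N T : ℝ} {i₀ : Fin d} {v : 𝔼 d}, v i₀ = N → ‖v‖ = N → 2 ≤ N → (d : ℝ) ≤ N → 0 < T →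
      2 * d * N * T ≤ 1 → ∀ r : ℝ, c * r ^ 2 * T * N ^ (-(2 * s)) ≤
        (∫ ξ, (1 + ‖ξ‖ ^ 2) ^ l * ‖Wfun s r (cube d) {0, v} T ξ‖ ^ 2) ^ (1 / 2 : ℝ) := by
  refine ⟨(1 + (d / 2) ^ 2) ^ (-|l / 2|) * ((1 / 4) * (4 ^ (-|-s / 2|)) ^ 2 * (1 / 2) *
    (1 / 4) ^ d) * (1 / 2) ^ d, by positivity, fun {N T i₀ v} hv₀ hvN hN₂ hNd hT hTN r => ?_⟩
  have key := mul_sqrt_measureReal_le_weighted_norm_Wfun measurableSet_cube isBounded_cube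
    (measurableSet_box (0 : 𝔼 d) (1 / 4) (1 / 2)) (by rw [volume_box]; simp)
    (P := (1 + (d / 2) ^ 2) ^ (-|l / 2|) * (r ^ 2 * (1 / 4) *
      ((4 ^ (-|-s / 2|) * (N ^ 2) ^ (-s / 2)) ^ 2 * (T / 2) * (1 / 4) ^ d))) (by positivity)
    fun ξ hξ => by
      have hξ0 : ‖ξ‖ ≤ d / 2 := by
        simpa using norm_le_of_mem_cube (sub_mem_cube_of_mem_box hξ (by norm_num) le_rfl)
      gcongr
      · exact le_one_add_norm_sq_rpow hξ0 (l / 2)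
      · exact le_re_Wfun_of_mem_box_low hv₀ hvN hN₂ hNd hT hTN hξ
  refine le_of_eq_of_le ?_ key
  have hN₀ : 0 ≤ N := by linarith
  rw [sqrt_measureReal_box_quarter, sq_rpow_div_two hN₀, mul_pow, ← Real.rpow_natCast (N ^ (-s)) 2,
    ← Real.rpow_mul hN₀]
  ring_nf

theorem statement_16 (d : ℕ) (hd : 0 < d) (s l : ℝ) :
    ∃ c : ℝ, 0 < c ∧ ∃ N₀ : ℕ, ∀ N : ℕ, N₀ ≤ N →
      (∀ T : ℝ, 0 < T → T ≤ c * (N : ℝ) ^ (-(2 : ℝ)) →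
        c * (((Real.log N) ^ 2)⁻¹) ^ 2 * T * (N : ℝ) ^ (l - s + 1) ≤
          (∫ ξ, (1 + ‖ξ‖ ^ 2) ^ l *
              ‖Wfun s (((Real.log N) ^ 2)⁻¹)
                {ξ : EuclideanSpace ℝ (Fin d) | ∀ i, |ξ i| < 1 / 2}
                {0, (N : ℝ) • EuclideanSpace.single (⟨0, hd⟩ : Fin d) (1 : ℝ)} T ξ‖ ^ 2) ^
            (1 / 2 : ℝ)) ∧
      (∀ T : ℝ, 0 < T → T ≤ c * (N : ℝ) ^ (-(1 : ℝ)) →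
        c * (((Real.log N) ^ 2)⁻¹) ^ 2 * T * (N : ℝ) ^ (-(2 * s)) ≤
          (∫ ξ, (1 + ‖ξ‖ ^ 2) ^ l *
              ‖Wfun s (((Real.log N) ^ 2)⁻¹)
                {ξ : EuclideanSpace ℝ (Fin d) | ∀ i, |ξ i| < 1 / 2}
                {0, (N : ℝ) • EuclideanSpace.single (⟨0, hd⟩ : Fin d) (1 : ℝ)} T ξ‖ ^ 2) ^
            (1 / 2 : ℝ)) := by
  obtain ⟨c₁, hc₁, h₁⟩ := exists_weighted_norm_Wfun_ge_high d s l
  obtain ⟨c₂, hc₂, h₂⟩ := exists_weighted_norm_Wfun_ge_low d s l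
  have hd₁ : (1 : ℝ) ≤ d := by exact_mod_cast hd
  set c := min (min c₁ c₂) (1 / (8 * d))
  have hc : 8 * d * c ≤ 1 := by
    have := min_le_right (min c₁ c₂) (1 / (8 * d))
    rwa [le_div_iff₀ (by positivity), mul_comm] at this
  refine ⟨c, by positivity, d + 2, fun N hN => ?_⟩
  have hN : (d : ℝ) + 2 ≤ N := by exact_mod_cast hN
  have hv₀ : ((N : ℝ) • EuclideanSpace.single (⟨0, hd⟩ : Fin d) (1 : ℝ)) ⟨0, hd⟩ = N := by simp
  have hvN : ‖(N : ℝ) • EuclideanSpace.single (⟨0, hd⟩ : Fin d) (1 : ℝ)‖ = N := by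
    simp [norm_smul]
  refine ⟨fun T hT hTc => ?_, fun T hT hTc => ?_⟩
  · have hTN := mul_rpow_mul_le_of_le_mul_rpow_neg (K := 8) (by norm_num) (by linarith) hTc
    rw [Real.rpow_two] at hTN
    refine le_trans ?_ (h₁ hv₀ hvN (by linarith) (by linarith) hT (by nlinarith) _)
    gcongr
    exact (min_le_left _ _).trans (min_le_left _ _)
  · have hTN := mul_rpow_mul_le_of_le_mul_rpow_neg (K := 2 * d) (by positivity) (by linarith) hTc
    rw [Real.rpow_one] at hTN
    refine le_trans ?_ (h₂ hv₀ hvN (by linarith) (by linarith) hT (by nlinarith) _)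
    gcongr
    exact (min_le_left _ _).trans (min_le_right _ _)

end
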